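/- Let A be a unital C*-algebra faithfully represented on a Hilbert space K via ρ, let γ : B(K) → B(K) be a unital completely positive map, and let E : B(K) → B(K) be a unital completely positive map with range containing ρ(A). Suppose E(γ(ρ(a))) = ρ(a) for all a ∈ A. Then for all a ∈ A, E(γ(ρ(a))* γ(ρ(a))) = E(γ(ρ(a)))* E(γ(ρ(a))); consequently every element of γ(ρ(A)) lies in the multiplicative domain of E. -/

import Mathlib

open scoped InnerProductSpace

/-- A matrix over a star ring is "star positive" if it factors as `Nᴴ * N`.
In a C*-algebra `Mₙ(A)` this is exactly positivity. -/
def MatStarPos {R : Type*} [Ring R] [StarRing R] {n : ℕ}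
    (M : Matrix (Fin n) (Fin n) R) : Prop :=
  ∃ N : Matrix (Fin n) (Fin n) R, M = N.conjTranspose * N

/-- A unital completely positive map between complex star algebras. -/
structure IsUCP {A B : Type*} [Ring A] [StarRing A] [Algebra ℂ A]
    [Ring B] [StarRing B] [Algebra ℂ B] (φ : A → B) : Prop where
  linear : IsLinearMap ℂ φ
  unital : φ 1 = 1
  cp : ∀ (n : ℕ) (M : Matrix (Fin n) (Fin n) A), MatStarPos M → MatStarPos (M.map φ)

/-! A completely positive map sends the positive block matrix `[[1, x], [x⋆, x⋆x]]` to a positive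
matrix, and testing the image against vectors `(-φ(x) η, η)` gives the Kadison–Schwarz inequality
`φ(x)⋆ φ(x) ≤ φ(x⋆x)`. For `x = γ(ρ a)` the inequality for `γ`, monotonicity of `E` and
`E ∘ γ ∘ ρ = ρ` give `E(x⋆x) ≤ E(γ(ρ(a⋆a))) = ρ(a)⋆ρ(a) = E(x)⋆E(x)`, so the Schwarz inequality
for `E` at `x` is an equality. The second identity is the first one for `a⋆`. -/

open scoped ComplexOrder Matrix

lemma MatStarPos.isHermitian {R : Type*} [Ring R] [StarRing R] {n : ℕ}
    {M : Matrix (Fin n) (Fin n) R} (hM : MatStarPos M) : M.IsHermitian := by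
  obtain ⟨N, rfl⟩ := hM
  exact Matrix.isHermitian_conjTranspose_mul_self N

lemma matStarPos_fin_one_iff {R : Type*} [Ring R] [StarRing R]
    {M : Matrix (Fin 1) (Fin 1) R} : MatStarPos M ↔ ∃ t, M 0 0 = star t * t := by
  constructor
  · rintro ⟨N, rfl⟩
    exact ⟨N 0 0, by simp [Matrix.mul_apply, Matrix.conjTranspose_apply]⟩
  · rintro ⟨t, ht⟩
    refine ⟨!![t], ?_⟩
    ext i j
    fin_cases i; fin_cases j
    simpa [Matrix.mul_apply, Matrix.conjTranspose_apply] using ht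

lemma matStarPos_schwarzMatrix {R : Type*} [Ring R] [StarRing R] (x : R) :
    MatStarPos !![1, x; star x, star x * x] := by
  refine ⟨!![1, x; 0, 0], ?_⟩
  ext i j
  fin_cases i <;> fin_cases j <;>
    simp [Matrix.mul_apply, Matrix.conjTranspose_apply]

section Operators

variable {K : Type*} [NormedAddCommGroup K] [InnerProductSpace ℂ K] [CompleteSpace K]

lemma MatStarPos.sum_inner_nonneg {n : ℕ} {M : Matrix (Fin n) (Fin n) (K →L[ℂ] K)}
    (hM : MatStarPos M) (v : Fin n → K) : 0 ≤ ∑ i, ∑ j, ⟪M i j (v j), v i⟫_ℂ := by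
  obtain ⟨P, rfl⟩ := hM
  have hsum : ∑ i, ∑ j, ⟪(Pᴴ * P) i j (v j), v i⟫_ℂ
      = ∑ k, ⟪∑ j, P k j (v j), ∑ i, P k i (v i)⟫_ℂ := by
    simp only [Matrix.mul_apply, Matrix.conjTranspose_apply, sum_apply,
      mul_apply_eq_comp, sum_inner, inner_sum, ContinuousLinearMap.star_eq_adjoint,
      ContinuousLinearMap.adjoint_inner_left]
    exact (Finset.sum_congr rfl fun _ _ => Finset.sum_comm).trans Finset.sum_comm
  rw [hsum]
  exact Finset.sum_nonneg fun k _ => CStarModule.inner_self_nonneg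

lemma star_mul_self_le_of_matStarPos {y z : K →L[ℂ] K}
    (h : MatStarPos !![1, y; star y, z]) : star y * y ≤ z := by
  have hz : IsSelfAdjoint z := show star z = z by simpa using h.isHermitian.apply 1 1
  rw [ContinuousLinearMap.le_def, ContinuousLinearMap.isPositive_iff']
  refine ⟨hz.sub (IsSelfAdjoint.star_mul_self y), fun η => ?_⟩
  convert h.sum_inner_nonneg ![-(y η), η] using 1
  simp [Fin.sum_univ_two, inner_sub_left, ContinuousLinearMap.star_eq_adjoint,
    ContinuousLinearMap.adjoint_inner_left]
  ring

end Operators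

namespace IsUCP

lemma map_star {A B : Type*} [Ring A] [StarRing A] [Algebra ℂ A] [Ring B] [StarRing B]
    [Algebra ℂ B] {φ : A → B} (hφ : IsUCP φ) (x : A) : φ (star x) = star (φ x) := by
  simpa using ((hφ.cp 2 _ (matStarPos_schwarzMatrix x)).isHermitian.apply 1 0).symm

lemma monotone {A B : Type*} [CStarAlgebra A] [PartialOrder A] [StarOrderedRing A]
    [Ring B] [StarRing B] [Algebra ℂ B] [PartialOrder B] [StarOrderedRing B]
    {φ : A → B} (hφ : IsUCP φ) : Monotone φ := by
  intro y z hyz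
  obtain ⟨s, hs⟩ := CStarAlgebra.nonneg_iff_eq_star_mul_self.mp (sub_nonneg.mpr hyz)
  obtain ⟨t, ht⟩ := matStarPos_fin_one_iff.mp
    (hφ.cp 1 !![z - y] (matStarPos_fin_one_iff.mpr ⟨s, hs⟩))
  have hφzy : φ (z - y) = star t * t := by simpa using ht
  rw [← sub_nonneg, ← hφ.linear.map_sub, hφzy]
  exact star_mul_self_nonneg t

lemma star_map_mul_map_le {A K : Type*} [Ring A] [StarRing A] [Algebra ℂ A]
    [NormedAddCommGroup K] [InnerProductSpace ℂ K] [CompleteSpace K]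
    {φ : A → (K →L[ℂ] K)} (hφ : IsUCP φ) (x : A) : star (φ x) * φ x ≤ φ (star x * x) := by
  apply star_mul_self_le_of_matStarPos
  convert hφ.cp 2 _ (matStarPos_schwarzMatrix x) using 1
  ext i j
  fin_cases i <;> fin_cases j <;> simp [hφ.unital, hφ.map_star]

lemma map_star_mul_self_eq_of_le {A K : Type*} [CStarAlgebra A] [PartialOrder A]
    [StarOrderedRing A] [NormedAddCommGroup K] [InnerProductSpace ℂ K] [CompleteSpace K]
    {φ : A → (K →L[ℂ] K)} (hφ : IsUCP φ) {x y : A} (hxy : star x * x ≤ y)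
    (hy : φ y = star (φ x) * φ x) : φ (star x * x) = star (φ x) * φ x :=
  le_antisymm (hy ▸ hφ.monotone hxy) (hφ.star_map_mul_map_le x)

end IsUCP

theorem stmt5_general {A : Type*} [CStarAlgebra A]
    {K : Type*} [NormedAddCommGroup K] [InnerProductSpace ℂ K] [CompleteSpace K]
    (ρ : A →⋆ₐ[ℂ] (K →L[ℂ] K))
    (γ E : (K →L[ℂ] K) → (K →L[ℂ] K)) (hγ : IsUCP γ) (hE : IsUCP E)
    (hfix : ∀ a : A, E (γ (ρ a)) = ρ a) :
    ∀ a : A,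
      E (star (γ (ρ a)) * γ (ρ a)) = star (E (γ (ρ a))) * E (γ (ρ a)) ∧
      E (γ (ρ a) * star (γ (ρ a))) = E (γ (ρ a)) * star (E (γ (ρ a))) := by
  have hEq : ∀ a : A, E (star (γ (ρ a)) * γ (ρ a)) = star (E (γ (ρ a))) * E (γ (ρ a)) :=
    fun a => hE.map_star_mul_self_eq_of_le (y := γ (ρ (star a * a)))
      (by simpa only [map_mul, map_star] using hγ.star_map_mul_map_le (ρ a))
      (by rw [hfix, hfix, map_mul, map_star])
  intro a
  refine ⟨hEq a, ?_⟩
  simpa only [map_star, hγ.map_star, hE.map_star, star_star] using hEq (star a)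

theorem stmt5 {A : Type*} [CStarAlgebra A]
    {K : Type*} [NormedAddCommGroup K] [InnerProductSpace ℂ K] [CompleteSpace K]
    (ρ : A →⋆ₐ[ℂ] (K →L[ℂ] K)) (hρ : Function.Injective ρ)
    (γ E : (K →L[ℂ] K) → (K →L[ℂ] K)) (hγ : IsUCP γ) (hE : IsUCP E)
    (hrange : ∀ a : A, ρ a ∈ Set.range E)
    (hfix : ∀ a : A, E (γ (ρ a)) = ρ a) :
    ∀ a : A,
      E (star (γ (ρ a)) * γ (ρ a)) = star (E (γ (ρ a))) * E (γ (ρ a)) ∧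
      E (γ (ρ a) * star (γ (ρ a))) = E (γ (ρ a)) * star (E (γ (ρ a))) :=
  stmt5_general ρ γ E hγ hE hfix
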